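/- Let X be a Banach space with a 1-unconditional basis, and let D: X → X be a bounded diagonal operator with diagonal entries (λ_n), Λ = sup_n |λ_n| > 0. Suppose that for every ε > 0, every block subspace of X contains a further block subspace [y_m] and a scalar α_ε with |α_ε| ≤ Λ such that ‖(D − α_ε·Id)|_{[y_m]}‖ < ε. Then there exist a scalar α_0 and an infinite-dimensional block subspace Y_0 of X such that (D − α_0·Id)|_{Y_0} is a compact operator. -/

import Mathlib

/-!
Applying the hypothesis with `ε = 2⁻ⁿ` repeatedly gives a decreasing chain of block subspaces
`Yₙ` on which `D` is `2⁻ⁿ`-close to `αₙ • id`, with `|αₙ| ≤ Λ`; a subsequence `α (φ k)` converges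
to some `α₀`. A diagonal block sequence `z` with `z k ∈ Y (φ k)` has every tail `[z j]_{j ≥ k}`
inside `Y (φ k)`, where `D - α₀ • id` has norm at most `εₖ → 0`. By 1-unconditionality,
deleting the first `N` coordinates is a contraction, and for suitable `N` it maps `[z]` into such a
tail; so `D - α₀ • id` on `[z]` is a norm limit of finite-rank operators, hence compact.
-/

open scoped BigOperators Classical
open Filter Topology

structure RealSchauderBasis (X : Type*) [NormedAddCommGroup X] [NormedSpace ℝ X] where
  e : ℕ → X
  coord : ℕ → X →L[ℝ] ℝ
  ortho : ∀ i j, coord i (e j) = if i = j then 1 else 0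
  expansion : ∀ x : X, HasSum (fun i => coord i x • e i) x

section Defs

variable {X : Type*} [NormedAddCommGroup X] [NormedSpace ℝ X]

def RealSchauderBasis.IsUnconditionalWith (b : RealSchauderBasis X) (C : ℝ) : Prop :=
  ∀ x y : X, (∀ i, |b.coord i y| ≤ |b.coord i x|) → ‖y‖ ≤ C * ‖x‖

def RealSchauderBasis.supp (b : RealSchauderBasis X) (x : X) : Set ℕ := {i | b.coord i x ≠ 0}

def StrictlySingular {E F : Type*} [NormedAddCommGroup E] [NormedSpace ℝ E]
    [NormedAddCommGroup F] [NormedSpace ℝ F] (T : E →L[ℝ] F) : Prop :=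
  ∀ Y : Submodule ℝ E, ¬ FiniteDimensional ℝ Y →
    ¬ ∃ c : ℝ, 0 < c ∧ ∀ y ∈ Y, c * ‖y‖ ≤ ‖T y‖

def RealSchauderBasis.TightBySupport (b : RealSchauderBasis X) : Prop :=
  ∀ Y Z : Submodule ℝ X, IsClosed (Y : Set X) → IsClosed (Z : Set X) →
    ¬ FiniteDimensional ℝ Y → ¬ FiniteDimensional ℝ Z →
    (∀ y ∈ Y, ∀ z ∈ Z, ∀ i, b.coord i y ≠ 0 → b.coord i z = 0) →
    IsEmpty (Y ≃L[ℝ] Z)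

def RealSchauderBasis.IsBlockSequence (b : RealSchauderBasis X) (x : ℕ → X) : Prop :=
  (∀ n, x n ≠ 0) ∧ (∀ n, (b.supp (x n)).Finite) ∧
    ∀ m n i j, m < n → b.coord i (x m) ≠ 0 → b.coord j (x n) ≠ 0 → i < j

def closedSpan (x : ℕ → X) : Submodule ℝ X :=
  (Submodule.span ℝ (Set.range x)).topologicalClosure

def RealSchauderBasis.IsDiagonal (b : RealSchauderBasis X) (D : X →L[ℝ] X) : Prop :=
  ∀ i, ∃ lam : ℝ, D (b.e i) = lam • b.e i

def IsL1Average (b : RealSchauderBasis X) (x : X) (n : ℕ) (c : ℝ) : Prop :=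
  0 < n ∧ 1 ≤ c ∧ ∃ xs : Fin n → X,
    (∀ i, ‖xs i‖ ≤ 1) ∧
    (∀ i j : Fin n, i < j → ∀ p q, b.coord p (xs i) ≠ 0 → b.coord q (xs j) ≠ 0 → p < q) ∧
    x = (n : ℝ)⁻¹ • ∑ i, xs i ∧ 1 / c ≤ ‖x‖

end Defs

namespace RealSchauderBasis

variable {X : Type*} [NormedAddCommGroup X] [NormedSpace ℝ X] (b : RealSchauderBasis X)

theorem eq_zero_of_forall_coord_eq_zero {x : X} (h : ∀ i, b.coord i x = 0) : x = 0 :=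
  (b.expansion x).unique (by simp [h, hasSum_zero])

theorem exists_coord_ne_zero {x : X} (hx : x ≠ 0) : ∃ i, b.coord i x ≠ 0 := by
  by_contra! h
  exact hx (b.eq_zero_of_forall_coord_eq_zero h)

theorem coord_e_ne_zero_iff (i j : ℕ) : b.coord i (b.e j) ≠ 0 ↔ i = j := by
  rw [b.ortho]; split_ifs <;> simp_all

def proj (N : ℕ) : X →L[ℝ] X :=
  ∑ i ∈ Finset.range N, (b.coord i).smulRight (b.e i)

theorem proj_apply (N : ℕ) (x : X) :
    b.proj N x = ∑ i ∈ Finset.range N, b.coord i x • b.e i := by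
  simp [proj]

theorem coord_proj (N : ℕ) (x : X) (i : ℕ) :
    b.coord i (b.proj N x) = if i < N then b.coord i x else 0 := by
  simp only [proj_apply, map_sum, map_smul, b.ortho, smul_eq_mul, mul_ite, mul_one, mul_zero,
    Finset.sum_ite_eq, Finset.mem_range]

theorem proj_eq_self {N : ℕ} {x : X} (h : ∀ i, b.coord i x ≠ 0 → i < N) : b.proj N x = x := by
  rw [proj_apply]
  refine (hasSum_sum_of_ne_finset_zero fun i hi => ?_).unique (b.expansion x)
  by_contra hne
  exact hi (Finset.mem_range.2 (h i (left_ne_zero_of_smul hne)))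

theorem proj_eq_zero {N : ℕ} {x : X} (h : ∀ i < N, b.coord i x = 0) : b.proj N x = 0 := by
  rw [proj_apply]
  exact Finset.sum_eq_zero fun i hi => by rw [h i (Finset.mem_range.1 hi), zero_smul]

theorem norm_sub_proj_le (hb : b.IsUnconditionalWith 1) (N : ℕ) (x : X) :
    ‖x - b.proj N x‖ ≤ ‖x‖ := by
  refine (hb x _ fun i => ?_).trans_eq (one_mul _)
  rw [map_sub, coord_proj]
  split_ifs <;> simp

theorem isCompactOperator_proj (N : ℕ) : IsCompactOperator (b.proj N) := by
  refine Submodule.sum_mem (compactOperator (RingHom.id ℝ) X X) fun i _ => ?_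
  exact (isCompactOperator_of_locallyCompactSpace_dom (b.coord i)).clm_comp
    ((ContinuousLinearMap.id ℝ ℝ).smulRight (b.e i))

theorem isCompactOperator_comp_subtypeL_of_forall_norm_sub_proj_le {F : Type*}
    [NormedAddCommGroup F] [NormedSpace ℝ F] [CompleteSpace F] (T : X →L[ℝ] F)
    (Y : Submodule ℝ X) (h : ∀ δ > 0, ∃ N, ∀ u ∈ Y, ‖T (u - b.proj N u)‖ ≤ δ * ‖u‖) :
    IsCompactOperator (T ∘L Y.subtypeL) := by
  choose N hN using fun k : ℕ => h (1 / (k + 1)) Nat.one_div_pos_of_nat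
  refine isCompactOperator_of_tendsto (l := atTop)
    (F := fun k => T ∘L b.proj (N k) ∘L Y.subtypeL) ?_
    (Eventually.of_forall fun k =>
      ((b.isCompactOperator_proj (N k)).clm_comp T).comp_clm Y.subtypeL)
  rw [tendsto_iff_norm_sub_tendsto_zero]
  refine squeeze_zero (fun _ => norm_nonneg _) (fun k => ?_)
    tendsto_one_div_add_atTop_nhds_zero_nat
  refine ContinuousLinearMap.opNorm_le_bound _ Nat.one_div_pos_of_nat.le fun u => ?_
  simpa [norm_sub_rev] using hN k u u.2

end RealSchauderBasis

section ClosedSpan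

variable {X : Type*} [NormedAddCommGroup X] [NormedSpace ℝ X]

theorem mem_closedSpan (x : ℕ → X) (m : ℕ) : x m ∈ closedSpan x :=
  Submodule.le_topologicalClosure _ (Submodule.subset_span ⟨m, rfl⟩)

theorem closedSpan_le {x : ℕ → X} {S : Submodule ℝ X} (hS : IsClosed (S : Set X))
    (h : ∀ m, x m ∈ S) : closedSpan x ≤ S :=
  Submodule.topologicalClosure_minimal _ (Submodule.span_le.2 (Set.range_subset_iff.2 h)) hS

theorem closedSpan_le_closedSpan {x y : ℕ → X} (h : ∀ m, y m ∈ closedSpan x) :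
    closedSpan y ≤ closedSpan x :=
  closedSpan_le (Submodule.isClosed_topologicalClosure _) h

end ClosedSpan

namespace RealSchauderBasis

variable {X : Type*} [NormedAddCommGroup X] [NormedSpace ℝ X] {b : RealSchauderBasis X}

theorem isBlockSequence_e (b : RealSchauderBasis X) : b.IsBlockSequence b.e := by
  refine ⟨fun n hn => ?_, fun n => ?_, fun m n i j hmn hi hj => ?_⟩
  · simpa [hn] using b.ortho n n
  · exact (Set.finite_singleton n).subset fun i hi => (b.coord_e_ne_zero_iff i n).1 hi
  · rwa [(b.coord_e_ne_zero_iff i m).1 hi, (b.coord_e_ne_zero_iff j n).1 hj]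

theorem isBlockSequence_of_succ {x : ℕ → X} (hx : ∀ n, x n ≠ 0)
    (hfin : ∀ n, (b.supp (x n)).Finite)
    (hsucc : ∀ n i j, b.coord i (x n) ≠ 0 → b.coord j (x (n + 1)) ≠ 0 → i < j) :
    b.IsBlockSequence x := by
  refine ⟨hx, hfin, fun m n i j hmn hi hj => ?_⟩
  induction n, hmn using Nat.le_induction generalizing j with
  | base => exact hsucc m i j hi hj
  | succ n hmn ih =>
    obtain ⟨p, hp⟩ := b.exists_coord_ne_zero (hx n)
    exact (ih p hp).trans (hsucc n p j hp hj)

namespace IsBlockSequence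

variable {v : ℕ → X}

theorem coord_eq_zero_of_ne (hv : b.IsBlockSequence v) {m n : ℕ} (hmn : m ≠ n) {p : ℕ}
    (hp : b.coord p (v n) ≠ 0) : b.coord p (v m) = 0 := by
  by_contra hm
  rcases hmn.lt_or_gt with h | h
  · exact lt_irrefl p (hv.2.2 m n p p h hm hp)
  · exact lt_irrefl p (hv.2.2 n m p p h hp hm)

theorem linearIndependent (hv : b.IsBlockSequence v) : LinearIndependent ℝ v := by
  refine linearIndependent_iff'.2 fun s g hsum n hn => ?_
  obtain ⟨p, hp⟩ := b.exists_coord_ne_zero (hv.1 n)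
  have hcoord := congrArg (b.coord p) hsum
  simp only [map_sum, map_smul, smul_eq_mul, map_zero] at hcoord
  rw [Finset.sum_eq_single_of_mem n hn fun m _ hmn => by
    rw [hv.coord_eq_zero_of_ne hmn hp, mul_zero]] at hcoord
  exact (mul_eq_zero.1 hcoord).resolve_right hp

theorem not_finiteDimensional_closedSpan (hv : b.IsBlockSequence v) :
    ¬ FiniteDimensional ℝ (closedSpan v) := by
  intro _
  let w : ℕ → closedSpan v := fun m => ⟨v m, mem_closedSpan v m⟩
  have : Finite ℕ := (LinearIndependent.of_comp (closedSpan v).subtype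
    (v := w) hv.linearIndependent).finite
  exact not_finite ℕ

theorem exists_coord_eq_zero_of_le (hv : b.IsBlockSequence v) (N : ℕ) :
    ∃ m, ∀ i ≤ N, b.coord i (v m) = 0 := by
  choose s hs using fun n => b.exists_coord_ne_zero (hv.1 n)
  have hs_mono : StrictMono s := fun m n hmn => hv.2.2 m n (s m) (s n) hmn (hs m) (hs n)
  refine ⟨N + 1, fun i hi => ?_⟩
  by_contra hne
  have := hv.2.2 N (N + 1) (s N) i N.lt_succ_self (hs N) hne
  have := hs_mono.le_apply (x := N)
  omega

-- `N` is the first index in the support of `v k`.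
theorem exists_sub_proj_mem_closedSpan_tail (hv : b.IsBlockSequence v) (k : ℕ) :
    ∃ N, ∀ u ∈ closedSpan v, u - b.proj N u ∈ closedSpan (fun j => v (j + k)) := by
  have hex := b.exists_coord_ne_zero (hv.1 k)
  refine ⟨Nat.find hex, fun u hu => ?_⟩
  set S := closedSpan (fun j => v (j + k))
  let f : X →L[ℝ] X := ContinuousLinearMap.id ℝ X - b.proj (Nat.find hex)
  suffices closedSpan v ≤ S.comap (f : X →ₗ[ℝ] X) from this hu
  refine closedSpan_le ((Submodule.isClosed_topologicalClosure _).preimage f.continuous)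
    fun j => ?_
  change v j - b.proj (Nat.find hex) (v j) ∈ S
  rcases lt_or_ge j k with hjk | hkj
  · rw [b.proj_eq_self fun i hi => hv.2.2 j k i _ hjk hi (Nat.find_spec hex), sub_self]
    exact S.zero_mem
  · have hlow : ∀ i < Nat.find hex, b.coord i (v j) = 0 := by
      intro i hi
      rcases hkj.eq_or_lt with rfl | hkj
      · exact not_not.1 (Nat.find_min hex hi)
      · by_contra hne
        exact absurd (hv.2.2 k j _ i hkj (Nat.find_spec hex) hne) (by omega)
    rw [b.proj_eq_zero hlow, sub_zero]
    simpa [Nat.sub_add_cancel hkj] using mem_closedSpan (fun j => v (j + k)) (j - k)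

theorem isCompactOperator_of_tendsto_tail {F : Type*} [NormedAddCommGroup F] [NormedSpace ℝ F]
    [CompleteSpace F] (hb : b.IsUnconditionalWith 1) (hv : b.IsBlockSequence v) (T : X →L[ℝ] F)
    {ε : ℕ → ℝ} (hε : Tendsto ε atTop (𝓝 0))
    (hT : ∀ k, ∀ w ∈ closedSpan (fun j => v (j + k)), ‖T w‖ ≤ ε k * ‖w‖) :
    IsCompactOperator (T ∘L (closedSpan v).subtypeL) := by
  refine b.isCompactOperator_comp_subtypeL_of_forall_norm_sub_proj_le T _ fun δ hδ => ?_
  obtain ⟨k, hk⟩ := (hε.eventually (ge_mem_nhds hδ)).exists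
  obtain ⟨N, hN⟩ := hv.exists_sub_proj_mem_closedSpan_tail k
  refine ⟨N, fun u hu => ?_⟩
  calc ‖T (u - b.proj N u)‖ ≤ ε k * ‖u - b.proj N u‖ := hT k _ (hN u hu)
    _ ≤ δ * ‖u‖ := mul_le_mul hk (b.norm_sub_proj_le hb N u) (norm_nonneg _) hδ.le

end IsBlockSequence

theorem exists_diagonal_isBlockSequence {W : ℕ → ℕ → X} (hW : ∀ k, b.IsBlockSequence (W k))
    (hanti : Antitone fun k => closedSpan (W k)) :
    ∃ z : ℕ → X, b.IsBlockSequence z ∧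
      ∀ k, closedSpan (fun j => z (j + k)) ≤ closedSpan (W k) := by
  choose m hm using fun k N => (hW k).exists_coord_eq_zero_of_le N
  let z : ℕ → X := fun k =>
    Nat.rec (W 0 0) (fun k zk => W (k + 1) (m (k + 1) (sSup (b.supp zk)))) k
  have hz : ∀ k, z k ≠ 0 ∧ (b.supp (z k)).Finite ∧ z k ∈ closedSpan (W k) := by
    rintro (_ | k)
    · exact ⟨(hW 0).1 0, (hW 0).2.1 0, mem_closedSpan _ 0⟩
    · exact ⟨(hW _).1 _, (hW _).2.1 _, mem_closedSpan _ _⟩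
  refine ⟨z, b.isBlockSequence_of_succ (fun k => (hz k).1) (fun k => (hz k).2.1)
    fun k i j hi hj => ?_, fun k => closedSpan_le_closedSpan fun j =>
      hanti (k.le_add_left j) (hz (j + k)).2.2⟩
  have hi_le : i ≤ sSup (b.supp (z k)) := le_csSup (hz k).2.1.bddAbove hi
  by_contra! hji
  exact hj (hm (k + 1) _ j (hji.trans hi_le))

theorem exists_antitone_isBlockSequence (b : RealSchauderBasis X) {P : ℕ → (ℕ → X) → Prop}
    (h : ∀ n v, b.IsBlockSequence v →
      ∃ y, b.IsBlockSequence y ∧ (∀ m, y m ∈ closedSpan v) ∧ P n y) :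
    ∃ V : ℕ → ℕ → X, (∀ n, b.IsBlockSequence (V n)) ∧
      Antitone (fun n => closedSpan (V n)) ∧ ∀ n, P n (V n) := by
  choose F hFb hFmem hFP using h
  let V : ℕ → {v : ℕ → X // b.IsBlockSequence v} := fun n =>
    Nat.rec ⟨F 0 b.e b.isBlockSequence_e, hFb _ _ _⟩
      (fun n v => ⟨F (n + 1) v.1 v.2, hFb _ _ _⟩) n
  refine ⟨fun n => (V n).1, fun n => (V n).2,
    antitone_nat_of_succ_le fun n => closedSpan_le_closedSpan (hFmem _ _ _), fun n => ?_⟩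
  cases n <;> exact hFP _ _ _

end RealSchauderBasis

theorem norm_sub_smul_le_add_abs {E : Type*} [SeminormedAddCommGroup E] [NormedSpace ℝ E]
    {x y : E} {α β c : ℝ} (h : ‖y - α • x‖ ≤ c * ‖x‖) :
    ‖y - β • x‖ ≤ (c + |α - β|) * ‖x‖ :=
  calc ‖y - β • x‖ = ‖(y - α • x) + (α - β) • x‖ := by rw [sub_smul]; abel_nf
    _ ≤ ‖y - α • x‖ + ‖(α - β) • x‖ := norm_add_le _ _
    _ ≤ c * ‖x‖ + |α - β| * ‖x‖ := by rw [norm_smul, Real.norm_eq_abs]; gcongr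
    _ = (c + |α - β|) * ‖x‖ := by ring

theorem stmt6_general {X : Type*} [NormedAddCommGroup X] [NormedSpace ℝ X] [CompleteSpace X]
    (b : RealSchauderBasis X) (hb : b.IsUnconditionalWith 1)
    (D : X →L[ℝ] X)
    (Λ : ℝ)
    (hyp : ∀ ε > (0 : ℝ), ∀ v : ℕ → X, b.IsBlockSequence v →
      ∃ y : ℕ → X, b.IsBlockSequence y ∧ (∀ m, y m ∈ closedSpan v) ∧
        ∃ α : ℝ, |α| ≤ Λ ∧ ∀ u ∈ closedSpan y, ‖D u - α • u‖ ≤ ε * ‖u‖) :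
    ∃ (α₀ : ℝ) (y₀ : ℕ → X), b.IsBlockSequence y₀ ∧
      ¬ FiniteDimensional ℝ ↥(closedSpan y₀) ∧
      IsCompactOperator (fun u : ↥(closedSpan y₀) => D (u : X) - α₀ • (u : X)) := by
  obtain ⟨V, hV, hanti, hVα⟩ := b.exists_antitone_isBlockSequence
    (P := fun n y => ∃ α : ℝ, |α| ≤ Λ ∧ ∀ u ∈ closedSpan y, ‖D u - α • u‖ ≤ 2⁻¹ ^ n * ‖u‖)
    fun n v hv => hyp _ (by positivity) v hv
  choose α hαΛ hαV using hVα
  obtain ⟨α₀, -, φ, hφ, hαφ⟩ := tendsto_subseq_of_bounded (Metric.isBounded_Icc (-Λ) Λ)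
    fun n => Set.mem_Icc.2 (abs_le.1 (hαΛ n))
  obtain ⟨z, hz, hz_tail⟩ := RealSchauderBasis.exists_diagonal_isBlockSequence
    (fun k => hV (φ k)) (hanti.comp_monotone hφ.monotone)
  have hε : Tendsto (fun k => (2⁻¹ : ℝ) ^ φ k + |α (φ k) - α₀|) atTop (𝓝 0) := by
    have hpow := (tendsto_pow_atTop_nhds_zero_of_lt_one (r := (2⁻¹ : ℝ)) (by norm_num)
      (by norm_num)).comp hφ.tendsto_atTop
    simpa using hpow.add (tendsto_sub_nhds_zero_iff.2 hαφ).abs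
  refine ⟨α₀, z, hz, hz.not_finiteDimensional_closedSpan,
    hz.isCompactOperator_of_tendsto_tail hb (D - α₀ • ContinuousLinearMap.id ℝ X) hε
      fun k w hw => ?_⟩
  simpa using norm_sub_smul_le_add_abs (hαV (φ k) w (hz_tail k hw))

/-- if a bounded diagonal operator D is, in every block subspace,
ε-close on a further block subspace to some multiple αε·Id with |αε| ≤ Λ, then
D − α₀·Id is compact on some infinite-dimensional block subspace. -/
theorem stmt6 {X : Type*} [NormedAddCommGroup X] [NormedSpace ℝ X] [CompleteSpace X]
    (b : RealSchauderBasis X) (hb : b.IsUnconditionalWith 1)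
    (D : X →L[ℝ] X) (lam : ℕ → ℝ) (hD : ∀ i, D (b.e i) = lam i • b.e i)
    (Λ : ℝ) (hΛ : Λ = ⨆ n, |lam n|) (hΛpos : 0 < Λ)
    (hyp : ∀ ε > (0 : ℝ), ∀ v : ℕ → X, b.IsBlockSequence v →
      ∃ y : ℕ → X, b.IsBlockSequence y ∧ (∀ m, y m ∈ closedSpan v) ∧
        ∃ α : ℝ, |α| ≤ Λ ∧ ∀ u ∈ closedSpan y, ‖D u - α • u‖ ≤ ε * ‖u‖) :
    ∃ (α₀ : ℝ) (y₀ : ℕ → X), b.IsBlockSequence y₀ ∧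
      ¬ FiniteDimensional ℝ ↥(closedSpan y₀) ∧
      IsCompactOperator (fun u : ↥(closedSpan y₀) => D (u : X) - α₀ • (u : X)) :=
  stmt6_general b hb D Λ hyp
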